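/- Let p(x) = Σ_{j=0}^d c_j x^j be a degree-d real polynomial with |p(x)| ≤ 1 for all x ∈ [-1,1]. Then max_{0 ≤ j ≤ d} |c_j| ≤ (√2 + 1)^d. -/

import Mathlib

open Polynomial Real Finset intervalIntegral

noncomputable def chT (k : ℕ) : Polynomial ℝ := Polynomial.Chebyshev.T ℝ (k : ℤ)

lemma chT_zero : chT 0 = 1 := Polynomial.Chebyshev.T_zero ℝ

lemma chT_one : chT 1 = X := Polynomial.Chebyshev.T_one ℝ

lemma chT_add_two (k : ℕ) : chT (k+2) = 2 * X * chT (k+1) - chT k := by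
  have h := Polynomial.Chebyshev.T_add_two ℝ (k : ℤ)
  unfold chT
  push_cast
  exact h

def v : ℕ → ℕ
  | 0 => 1
  | 1 => 1
  | (k+2) => 2 * v (k+1) + v k

lemma coeff_two_X_mul (p : Polynomial ℝ) (j : ℕ) :
    ((2 * X * p).coeff j) = 2 * (X * p).coeff j := by
  have h : (2 : Polynomial ℝ) = Polynomial.C 2 := (map_ofNat Polynomial.C 2).symm
  rw [mul_assoc, h, Polynomial.coeff_C_mul]

lemma coeff_X_mul' (p : Polynomial ℝ) (j : ℕ) :
    |(X * p).coeff j| ≤ |p.coeff (j-1)| := by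
  cases j with
  | zero => simp [Polynomial.mul_coeff_zero]
  | succ n => rw [Polynomial.coeff_X_mul]; simp

lemma chT_coeff_bound : ∀ k : ℕ, (∀ j, |(chT k).coeff j| ≤ (v k : ℝ)) ∧
    (∀ j, |(chT (k+1)).coeff j| ≤ (v (k+1) : ℝ)) := by
  intro k
  induction k with
  | zero =>
    constructor <;> intro j
    · rw [chT_zero, Polynomial.coeff_one]
      simp only [v]; split <;> norm_num
    · rw [chT_one, Polynomial.coeff_X]
      simp only [v]; split <;> norm_num
  | succ n ih =>
    refine ⟨ih.2, fun j => ?_⟩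
    rw [chT_add_two, Polynomial.coeff_sub, coeff_two_X_mul]
    have h1 : |(X * chT (n+1)).coeff j| ≤ (v (n+1) : ℝ) :=
      le_trans (coeff_X_mul' _ j) (ih.2 _)
    have h2 := ih.1 j
    have hv : (v (n+2) : ℝ) = 2 * (v (n+1) : ℝ) + (v n : ℝ) := by
      show ((v (n+2) : ℕ) : ℝ) = _
      rw [show v (n+2) = 2 * v (n+1) + v n from rfl]; push_cast; ring
    rw [hv]
    calc |2 * (X * chT (n+1)).coeff j - (chT n).coeff j|
        ≤ |2 * (X * chT (n+1)).coeff j| + |(chT n).coeff j| := abs_sub _ _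
      _ = 2 * |(X * chT (n+1)).coeff j| + |(chT n).coeff j| := by
          rw [abs_mul]; norm_num
      _ ≤ 2 * (v (n+1) : ℝ) + (v n : ℝ) := by linarith

lemma v_real : ∀ k : ℕ, (v k : ℝ) = ((1+Real.sqrt 2)^k + (1-Real.sqrt 2)^k)/2 ∧
    (v (k+1) : ℝ) = ((1+Real.sqrt 2)^(k+1) + (1-Real.sqrt 2)^(k+1))/2 := by
  have hs2 : (Real.sqrt 2)^2 = 2 := Real.sq_sqrt (by norm_num)
  intro k
  induction k with
  | zero => constructor <;> simp [v]
  | succ n ih =>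
    refine ⟨ih.2, ?_⟩
    have hv : (v (n+2) : ℝ) = 2 * (v (n+1) : ℝ) + (v n : ℝ) := by
      show ((v (n+2) : ℕ) : ℝ) = _
      rw [show v (n+2) = 2 * v (n+1) + v n from rfl]; push_cast; ring
    rw [hv, ih.1, ih.2]
    have e1 : (1+Real.sqrt 2)^(n+2) = (1+Real.sqrt 2)^n * (3 + 2*Real.sqrt 2) := by
      rw [show n+2 = n+1+1 from rfl, pow_succ, pow_succ]
      linear_combination ((1+Real.sqrt 2)^n) * hs2
    have e2 : (1-Real.sqrt 2)^(n+2) = (1-Real.sqrt 2)^n * (3 - 2*Real.sqrt 2) := by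
      rw [show n+2 = n+1+1 from rfl, pow_succ, pow_succ]
      linear_combination ((1-Real.sqrt 2)^n) * hs2
    rw [e1, e2, pow_succ, pow_succ]
    ring

lemma chT_natDegree_le : ∀ k : ℕ, (chT k).natDegree ≤ k := by
  have key : ∀ k : ℕ, (chT k).natDegree ≤ k ∧ (chT (k+1)).natDegree ≤ k+1 := by
    intro k
    induction k with
    | zero => exact ⟨by rw [chT_zero]; simp, by rw [chT_one]; simp⟩
    | succ n ih =>
      refine ⟨ih.2, ?_⟩
      rw [chT_add_two]
      apply le_trans (Polynomial.natDegree_sub_le _ _)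
      apply max_le
      · apply le_trans (Polynomial.natDegree_mul_le)
        have hX : ((2 : Polynomial ℝ) * X).natDegree ≤ 1 := by
          apply le_trans (Polynomial.natDegree_mul_le)
          simp
        omega
      · omega
  exact fun k => (key k).1

lemma chT_coeff_self : ∀ k : ℕ, (chT (k+1)).coeff (k+1) = 2^k := by
  have key : ∀ k : ℕ, (chT (k+1)).coeff (k+1) = 2^k ∧ (chT (k+2)).coeff (k+2) = 2^(k+1) := by
    intro k
    induction k with
    | zero =>
      constructor
      · rw [chT_one]; simp
      · rw [chT_add_two, Polynomial.coeff_sub, coeff_two_X_mul, chT_one, chT_zero]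
        simp [Polynomial.coeff_one]
    | succ n ih =>
      refine ⟨ih.2, ?_⟩
      rw [chT_add_two, Polynomial.coeff_sub, coeff_two_X_mul]
      rw [show n+3 = (n+2)+1 from rfl, Polynomial.coeff_X_mul, ih.2]
      have : (chT (n+1)).coeff (n+2+1) = 0 := by
        apply Polynomial.coeff_eq_zero_of_natDegree_lt
        exact lt_of_le_of_lt (chT_natDegree_le (n+1)) (by omega)
      rw [this]
      ring
  exact fun k => (key k).1

lemma exists_expansion : ∀ d : ℕ, ∀ p : Polynomial ℝ, p.natDegree ≤ d →
    ∃ b : ℕ → ℝ, p = ∑ k ∈ range (d+1), Polynomial.C (b k) * chT k := by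
  intro d
  induction d with
  | zero =>
    intro p hp
    refine ⟨fun _ => p.coeff 0, ?_⟩
    rw [Polynomial.eq_C_of_natDegree_le_zero hp]
    simp [chT_zero]
  | succ n ih =>
    intro p hp
    set a := p.coeff (n+1) / 2^n with ha
    have hq : (p - Polynomial.C a * chT (n+1)).natDegree ≤ n := by
      rw [Polynomial.natDegree_le_iff_coeff_eq_zero]
      intro N hN
      rw [Polynomial.coeff_sub, Polynomial.coeff_C_mul]
      rcases eq_or_lt_of_le (Nat.succ_le_of_lt hN) with h | h
      · rw [← h, chT_coeff_self, ha]
        field_simp; ring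
      · have h1 : p.coeff N = 0 := Polynomial.coeff_eq_zero_of_natDegree_lt (lt_of_le_of_lt hp h)
        have h2 : (chT (n+1)).coeff N = 0 := Polynomial.coeff_eq_zero_of_natDegree_lt
          (lt_of_le_of_lt (chT_natDegree_le (n+1)) h)
        rw [h1, h2]; ring
    obtain ⟨b, hb⟩ := ih _ hq
    refine ⟨fun k => if k = n+1 then a else b k, ?_⟩
    have h1 : ∑ k ∈ range (n+1), Polynomial.C (if k = n+1 then a else b k) * chT k
        = ∑ k ∈ range (n+1), Polynomial.C (b k) * chT k := by
      apply Finset.sum_congr rfl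
      intro k hk
      rw [if_neg (by have := Finset.mem_range.mp hk; omega)]
    rw [Finset.sum_range_succ, h1, ← hb]
    have h2 : (fun k => if k = n + 1 then a else b k) (n + 1) = a := if_pos rfl
    rw [h2]
    ring

lemma intcos_int (n : ℤ) : ∫ θ in (0:ℝ)..π, Real.cos ((n:ℝ)*θ) = if n = 0 then π else 0 := by
  by_cases hn : n = 0
  · subst hn; simp
  · rw [if_neg hn]
    have hc : ((n:ℝ)) ≠ 0 := Int.cast_ne_zero.mpr hn
    rw [intervalIntegral.integral_comp_mul_left (fun x => Real.cos x) hc]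
    simp [integral_cos, Real.sin_int_mul_pi]

lemma orth (k m : ℕ) : ∫ θ in (0:ℝ)..π, Real.cos (k*θ) * Real.cos (m*θ)
    = if k = m then (if k = 0 then π else π/2) else 0 := by
  have hprod : ∀ θ:ℝ, Real.cos (k*θ) * Real.cos (m*θ)
      = (Real.cos ((((k:ℤ)+m : ℤ):ℝ)*θ) + Real.cos ((((k:ℤ)-m : ℤ):ℝ)*θ))/2 := by
    intro θ
    rw [show ((((k:ℤ)+m : ℤ):ℝ))*θ = (k:ℝ)*θ + (m:ℝ)*θ by push_cast; ring,
      show ((((k:ℤ)-m : ℤ):ℝ))*θ = (k:ℝ)*θ - (m:ℝ)*θ by push_cast; ring,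
      Real.cos_add, Real.cos_sub]
    ring
  have hint1 : IntervalIntegrable (fun θ => Real.cos ((((k:ℤ)+m : ℤ):ℝ)*θ))
      MeasureTheory.volume 0 π := (Real.continuous_cos.comp
        (continuous_const.mul continuous_id)).intervalIntegrable 0 π
  have hint2 : IntervalIntegrable (fun θ => Real.cos ((((k:ℤ)-m : ℤ):ℝ)*θ))
      MeasureTheory.volume 0 π := (Real.continuous_cos.comp
        (continuous_const.mul continuous_id)).intervalIntegrable 0 π
  simp only [hprod]
  rw [intervalIntegral.integral_div, intervalIntegral.integral_add hint1 hint2,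
    intcos_int, intcos_int]
  by_cases hkm : k = m
  · subst hkm
    by_cases hk : k = 0
    · subst hk; norm_num
    · rw [if_pos rfl, if_neg hk]
      rw [if_neg (by omega : ¬((k:ℤ)+k = 0)), if_pos (by omega : (k:ℤ)-k = 0)]
      ring
  · rw [if_neg hkm]
    rw [if_neg (by omega : ¬((k:ℤ)+m = 0)), if_neg (by omega : ¬((k:ℤ)-m = 0))]
    norm_num

lemma sqrt2_lb : 1.4142 ≤ Real.sqrt 2 := by
  nlinarith [Real.sq_sqrt (show (0:ℝ) ≤ 2 by norm_num), Real.sqrt_nonneg 2]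

lemma sqrt2_ub : Real.sqrt 2 ≤ 1.4143 := by
  nlinarith [Real.sq_sqrt (show (0:ℝ) ≤ 2 by norm_num), Real.sqrt_nonneg 2]

lemma geo1 (d : ℕ) : ∑ k ∈ range d, (3+2*Real.sqrt 2)^(k+1)
    ≤ (Real.sqrt 2+1)/2 * (3+2*Real.sqrt 2)^d := by
  set s := Real.sqrt 2 with hs
  have hs0 : 0 ≤ s := Real.sqrt_nonneg 2
  have hs2 : s^2 = 2 := Real.sq_sqrt (by norm_num)
  induction d with
  | zero => simp; positivity
  | succ n ih =>
    rw [Finset.sum_range_succ, pow_succ]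
    have e : (s+1)/2*((3+2*s)^n*(3+2*s))
        = (s+1)/2*(3+2*s)^n + (3+2*s)^n*(3+2*s) := by
      linear_combination (3+2*s)^n * hs2
    rw [e]
    linarith [ih]

lemma geo2 (d : ℕ) : ∑ k ∈ range d, (3-2*Real.sqrt 2)^(k+1)
    ≤ (Real.sqrt 2-1)/2 * (1 - (3-2*Real.sqrt 2)^d) := by
  set s := Real.sqrt 2 with hs
  have hs0 : 0 ≤ s := Real.sqrt_nonneg 2
  have hs2 : s^2 = 2 := Real.sq_sqrt (by norm_num)
  induction d with
  | zero => simp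
  | succ n ih =>
    rw [Finset.sum_range_succ, pow_succ]
    have e : (s-1)/2*(1-(3-2*s)^n*(3-2*s))
        = (s-1)/2*(1-(3-2*s)^n) + (3-2*s)^n*(3-2*s) := by
      linear_combination (3-2*s)^n * hs2
    rw [e]
    linarith [ih]

lemma dle : ∀ d : ℕ, 2 ≤ d → (d:ℝ) ≤ 0.35*(1+Real.sqrt 2)^d := by
  have hs0 : 0 ≤ Real.sqrt 2 := Real.sqrt_nonneg 2
  have hs2 : (Real.sqrt 2)^2 = 2 := Real.sq_sqrt (by norm_num)
  have hlb := sqrt2_lb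
  intro d hd
  induction d, hd using Nat.le_induction with
  | base => nlinarith
  | succ n hn ih =>
    set s := Real.sqrt 2
    have h1 : (1+s)^2 ≤ (1+s)^n := pow_le_pow_right₀ (by nlinarith) hn
    rw [pow_succ]
    push_cast
    have h2 : 0.35*((3+2*s)*s) ≤ 0.35*((1+s)^n*s) := by nlinarith
    nlinarith [ih, h2]

noncomputable def Fsum (d : ℕ) (b : ℕ → ℝ) (θ : ℝ) : ℝ :=
  ∑ k ∈ range (d+1), b k * Real.cos ((k:ℝ)*θ)

lemma cos_mul_cont (m : ℕ) : Continuous (fun θ:ℝ => Real.cos ((m:ℝ)*θ)) :=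
  Real.continuous_cos.comp (continuous_const.mul continuous_id)

lemma Fsum_cont (d : ℕ) (b : ℕ → ℝ) : Continuous (Fsum d b) :=
  continuous_finset_sum _ fun k _ => continuous_const.mul (cos_mul_cont k)

lemma Fsum_I (d : ℕ) (b : ℕ → ℝ) (m : ℕ) (hm : m ∈ range (d+1)) :
    ∫ θ in (0:ℝ)..π, Fsum d b θ * Real.cos ((m:ℝ)*θ)
      = b m * (if m = 0 then π else π/2) := by
  have hexp : (fun θ => Fsum d b θ * Real.cos ((m:ℝ)*θ))
      = fun θ => ∑ k ∈ range (d+1), b k * (Real.cos ((k:ℝ)*θ) * Real.cos ((m:ℝ)*θ)) := by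
    funext θ
    rw [Fsum, Finset.sum_mul]
    exact Finset.sum_congr rfl fun _ _ => by ring
  rw [hexp, intervalIntegral.integral_finset_sum
    (f := fun k θ => b k * (Real.cos ((k:ℝ)*θ) * Real.cos ((m:ℝ)*θ))) (fun k _ =>
    (continuous_const.mul ((cos_mul_cont k).mul (cos_mul_cont m))).intervalIntegrable 0 π)]
  have h1 : ∀ k ∈ range (d+1),
      (∫ θ in (0:ℝ)..π, b k * (Real.cos ((k:ℝ)*θ) * Real.cos ((m:ℝ)*θ)))
        = b k * (if k = m then (if k = 0 then π else π/2) else 0) := by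
    intro k _
    rw [intervalIntegral.integral_const_mul, orth k m]
  rw [Finset.sum_congr rfl h1, Finset.sum_eq_single m]
  · rw [if_pos rfl]
  · intro k _ hk
    rw [if_neg hk]; ring
  · intro h; exact absurd hm h

lemma Fsum_sq (d : ℕ) (b : ℕ → ℝ) :
    ∫ θ in (0:ℝ)..π, Fsum d b θ * Fsum d b θ
      = ∑ m ∈ range (d+1), b m * (b m * (if m = 0 then π else π/2)) := by
  have hexp : (fun θ => Fsum d b θ * Fsum d b θ)
      = fun θ => ∑ m ∈ range (d+1), b m * (Fsum d b θ * Real.cos ((m:ℝ)*θ)) := by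
    funext θ
    conv_lhs => rw [show Fsum d b θ * Fsum d b θ
      = Fsum d b θ * ∑ m ∈ range (d+1), b m * Real.cos ((m:ℝ)*θ) from rfl]
    rw [Finset.mul_sum]
    exact Finset.sum_congr rfl fun _ _ => by ring
  rw [hexp, intervalIntegral.integral_finset_sum
    (f := fun m θ => b m * (Fsum d b θ * Real.cos ((m:ℝ)*θ))) (fun k _ =>
    (continuous_const.mul ((Fsum_cont d b).mul (cos_mul_cont k))).intervalIntegrable 0 π)]
  exact Finset.sum_congr rfl fun m hm => by
    rw [intervalIntegral.integral_const_mul, Fsum_I d b m hm]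

lemma geo2' (d : ℕ) : ∑ k ∈ range d, (3-2*Real.sqrt 2)^(k+1) ≤ (Real.sqrt 2-1)/2 := by
  have h := geo2 d
  have hy : (0:ℝ) ≤ (3-2*Real.sqrt 2)^d := pow_nonneg (by nlinarith [sqrt2_ub]) d
  nlinarith [sqrt2_lb]

lemma numeric_final (u dR s : ℝ) (hs2 : s^2 = 2) (hlb : 1.4142 ≤ s) (hub : s ≤ 1.4143)
    (hu5 : 5.8284 ≤ u) (hdd : dR ≤ 0.35*u) :
    (((s+1)/2*u^2 + 2*dR + (s-1)/2)/4)*2 ≤ (u - 1)^2 := by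
  have hsu : s * u^2 ≤ 1.4143 * u^2 := mul_le_mul_of_nonneg_right hub (sq_nonneg u)
  nlinarith [hu5, hdd, hsu, sq_nonneg (u - 5.8284)]

lemma le_of_sq_le' (T u : ℝ) (hT0 : 0 ≤ T) (h : T^2 ≤ (u-1)^2) (hu5 : 5.8284 ≤ u) :
    T ≤ u - 1 := by
  nlinarith

/-- Markov-type coefficient bound: a polynomial of degree at most d that is
bounded by 1 on [-1,1] has all coefficients bounded by (√2 + 1)^d. -/
theorem coeff_bound_of_bounded_on_interval (d : ℕ) (p : Polynomial ℝ)
    (hdeg : p.natDegree ≤ d)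
    (hbound : ∀ x ∈ Set.Icc (-1 : ℝ) 1, |p.eval x| ≤ 1) :
    ∀ j ≤ d, |p.coeff j| ≤ (Real.sqrt 2 + 1) ^ d := by
  have hs0 : 0 ≤ Real.sqrt 2 := Real.sqrt_nonneg 2
  have hs2 : (Real.sqrt 2)^2 = 2 := Real.sq_sqrt (by norm_num)
  have hlb := sqrt2_lb
  have hub := sqrt2_ub
  intro j hj
  rcases Nat.lt_or_ge d 2 with hd | hd
  · -- small degrees d = 0, 1
    have h1 := hbound 1 (by norm_num)
    have hm1 := hbound (-1) (by norm_num)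
    have h0 := hbound 0 (by norm_num)
    rw [← Polynomial.coeff_zero_eq_eval_zero] at h0
    interval_cases d
    · interval_cases j
      simpa using h0
    · have e1 : p.eval 1 = p.coeff 0 + p.coeff 1 := by
        rw [Polynomial.eval_eq_sum_range' (lt_of_le_of_lt hdeg (by norm_num : (1:ℕ) < 2))]
        simp [Finset.sum_range_succ]
      have e2 : p.eval (-1) = p.coeff 0 - p.coeff 1 := by
        rw [Polynomial.eval_eq_sum_range' (lt_of_le_of_lt hdeg (by norm_num : (1:ℕ) < 2))]
        simp [Finset.sum_range_succ]
        ring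
      rw [e1] at h1; rw [e2] at hm1
      rw [pow_one]
      rw [abs_le] at h1 hm1 h0 ⊢
      interval_cases j
      · constructor <;> nlinarith
      · constructor <;> nlinarith
  · -- main case, d ≥ 2
    obtain ⟨b, hb⟩ := exists_expansion d p hdeg
    have hev : ∀ θ:ℝ, p.eval (Real.cos θ) = Fsum d b θ := by
      intro θ
      rw [hb, Polynomial.eval_finset_sum, Fsum]
      apply Finset.sum_congr rfl
      intro k _
      rw [Polynomial.eval_mul, Polynomial.eval_C]
      congr 1
      have h := Polynomial.Chebyshev.T_real_cos θ (k:ℤ)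
      rw [chT, h]
      norm_num
    -- Parseval-type bound
    have hFle : ∫ θ in (0:ℝ)..π, Fsum d b θ * Fsum d b θ ≤ π := by
      have hmono := intervalIntegral.integral_mono_on (μ := MeasureTheory.volume)
        (f := fun θ => Fsum d b θ * Fsum d b θ) (g := fun _ => (1:ℝ))
        Real.pi_pos.le
        (((Fsum_cont d b).mul (Fsum_cont d b)).intervalIntegrable 0 π)
        (continuous_const.intervalIntegrable 0 π)
        (fun θ _ => by
          have h := hbound (Real.cos θ) ⟨Real.neg_one_le_cos θ, Real.cos_le_one θ⟩
          rw [hev θ] at h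
          have h' := abs_le.mp h
          show Fsum d b θ * Fsum d b θ ≤ (1:ℝ)
          nlinarith [h'.1, h'.2])
      simpa using hmono
    rw [Fsum_sq d b] at hFle
    have hpeel : ∑ m ∈ range (d+1), b m * (b m * (if m = 0 then π else π/2))
        = (b 0)^2 * π + ∑ k ∈ range d, (b (k+1))^2 * (π/2) := by
      rw [Finset.sum_range_succ']
      have h1 : ∀ k ∈ range d, b (k+1) * (b (k+1) * (if k+1 = 0 then π else π/2))
          = (b (k+1))^2 * (π/2) := by
        intro k _
        rw [if_neg (Nat.succ_ne_zero k)]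
        ring
      rw [Finset.sum_congr rfl h1, if_pos rfl]
      ring
    rw [hpeel] at hFle
    have hsumnn : (0:ℝ) ≤ ∑ k ∈ range d, (b (k+1))^2 :=
      Finset.sum_nonneg fun k _ => sq_nonneg _
    have hfac : ∑ k ∈ range d, (b (k+1))^2 * (π/2)
        = (∑ k ∈ range d, (b (k+1))^2) * (π/2) := by rw [← Finset.sum_mul]
    rw [hfac] at hFle
    have hb0 : |b 0| ≤ 1 := by
      have h1 : (b 0)^2 ≤ 1 := by nlinarith [Real.pi_pos]
      nlinarith [sq_abs (b 0), abs_nonneg (b 0)]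
    have hbsq : ∑ k ∈ range d, (b (k+1))^2 ≤ 2 := by
      nlinarith [Real.pi_pos, sq_nonneg (b 0)]
    -- coefficient decomposition
    have hcoeff : p.coeff j = ∑ k ∈ range (d+1), b k * (chT k).coeff j := by
      rw [hb, Polynomial.finset_sum_coeff]
      exact Finset.sum_congr rfl fun k _ => Polynomial.coeff_C_mul _
    have hsplit : p.coeff j = (∑ k ∈ range d, b (k+1) * (chT (k+1)).coeff j)
        + b 0 * (chT 0).coeff j := by
      rw [hcoeff, Finset.sum_range_succ']
    -- coefficient bounds for Chebyshev
    have hw : ∀ (k : ℕ) (j' : ℕ), |(chT k).coeff j'|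
        ≤ ((1+Real.sqrt 2)^k + (Real.sqrt 2-1)^k)/2 := by
      intro k j'
      have h1 := (chT_coeff_bound k).1 j'
      have h2 := (v_real k).1
      have h3 : (1-Real.sqrt 2)^k ≤ (Real.sqrt 2-1)^k := by
        calc (1-Real.sqrt 2)^k ≤ |(1-Real.sqrt 2)^k| := le_abs_self _
          _ = |1-Real.sqrt 2|^k := by rw [abs_pow]
          _ = (Real.sqrt 2-1)^k := by
              rw [abs_of_nonpos (by linarith : (1:ℝ)-Real.sqrt 2 ≤ 0), neg_sub]
      rw [h2] at h1
      linarith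
    have habs0 : |b 0 * (chT 0).coeff j| ≤ 1 := by
      rw [abs_mul, chT_zero, Polynomial.coeff_one]
      have h1 : |(if j = 0 then (1:ℝ) else 0)| ≤ 1 := by split <;> norm_num
      calc |b 0| * |(if j = 0 then (1:ℝ) else 0)| ≤ 1 * 1 :=
        mul_le_mul hb0 h1 (abs_nonneg _) (by norm_num)
        _ = 1 := by norm_num
    have hT : |∑ k ∈ range d, b (k+1) * (chT (k+1)).coeff j|
        ≤ ∑ k ∈ range d, |b (k+1)| * (((1+Real.sqrt 2)^(k+1) + (Real.sqrt 2-1)^(k+1))/2) := by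
      refine le_trans (Finset.abs_sum_le_sum_abs _ _) (Finset.sum_le_sum fun k _ => ?_)
      rw [abs_mul]
      exact mul_le_mul_of_nonneg_left (hw (k+1) j) (abs_nonneg _)
    -- Cauchy-Schwarz
    have hCS : (∑ k ∈ range d, |b (k+1)| * (((1+Real.sqrt 2)^(k+1) + (Real.sqrt 2-1)^(k+1))/2))^2
        ≤ 2 * ∑ k ∈ range d, (((1+Real.sqrt 2)^(k+1) + (Real.sqrt 2-1)^(k+1))/2)^2 := by
      have h := Finset.sum_mul_sq_le_sq_mul_sq (range d) (fun k => |b (k+1)|)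
        (fun k => ((1+Real.sqrt 2)^(k+1) + (Real.sqrt 2-1)^(k+1))/2)
      have h2 : ∑ k ∈ range d, |b (k+1)|^2 = ∑ k ∈ range d, (b (k+1))^2 :=
        Finset.sum_congr rfl fun k _ => sq_abs _
      rw [h2] at h
      have hWnn : (0:ℝ) ≤ ∑ k ∈ range d, (((1+Real.sqrt 2)^(k+1) + (Real.sqrt 2-1)^(k+1))/2)^2 :=
        Finset.sum_nonneg fun k _ => sq_nonneg _
      calc (∑ k ∈ range d, |b (k+1)| * (((1+Real.sqrt 2)^(k+1) + (Real.sqrt 2-1)^(k+1))/2))^2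
          ≤ (∑ k ∈ range d, (b (k+1))^2)
            * ∑ k ∈ range d, (((1+Real.sqrt 2)^(k+1) + (Real.sqrt 2-1)^(k+1))/2)^2 := h
        _ ≤ 2 * ∑ k ∈ range d, (((1+Real.sqrt 2)^(k+1) + (Real.sqrt 2-1)^(k+1))/2)^2 :=
            mul_le_mul_of_nonneg_right hbsq hWnn
    -- geometric estimate of the weight sum
    have hWk : ∀ k:ℕ, (((1+Real.sqrt 2)^(k+1) + (Real.sqrt 2-1)^(k+1))/2)^2
        = ((3+2*Real.sqrt 2)^(k+1) + 2 + (3-2*Real.sqrt 2)^(k+1))/4 := by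
      intro k
      have e1 : (1+Real.sqrt 2)^(k+1)*(1+Real.sqrt 2)^(k+1) = (3+2*Real.sqrt 2)^(k+1) := by
        rw [← mul_pow]; congr 1; linear_combination hs2
      have e2 : (Real.sqrt 2-1)^(k+1)*(Real.sqrt 2-1)^(k+1) = (3-2*Real.sqrt 2)^(k+1) := by
        rw [← mul_pow]; congr 1; linear_combination hs2
      have e3 : (1+Real.sqrt 2)^(k+1)*(Real.sqrt 2-1)^(k+1) = 1 := by
        rw [← mul_pow, show (1+Real.sqrt 2)*(Real.sqrt 2-1) = 1 by linear_combination hs2,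
          one_pow]
      linear_combination (e1 + 2*e3 + e2)/4
    have hWsum : ∑ k ∈ range d, (((1+Real.sqrt 2)^(k+1) + (Real.sqrt 2-1)^(k+1))/2)^2
        ≤ ((Real.sqrt 2+1)/2*(3+2*Real.sqrt 2)^d + 2*(d:ℝ) + (Real.sqrt 2-1)/2)/4 := by
      have hsum : ∑ k ∈ range d, (((1+Real.sqrt 2)^(k+1) + (Real.sqrt 2-1)^(k+1))/2)^2
          = (∑ k ∈ range d, (3+2*Real.sqrt 2)^(k+1) + 2*(d:ℝ)
            + ∑ k ∈ range d, (3-2*Real.sqrt 2)^(k+1))/4 := by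
        rw [Finset.sum_congr rfl (fun k _ => hWk k), ← Finset.sum_div,
          Finset.sum_add_distrib, Finset.sum_add_distrib, Finset.sum_const, card_range]
        push_cast; ring
      rw [hsum]
      linarith [geo1 d, geo2' d]
    -- final numeric estimate
    have hud : (3+2*Real.sqrt 2) ≤ (1+Real.sqrt 2)^d := by
      calc (3+2*Real.sqrt 2) = (1+Real.sqrt 2)^2 := by linear_combination -hs2
        _ ≤ (1+Real.sqrt 2)^d := pow_le_pow_right₀ (by linarith) hd
    have hu2 : (3+2*Real.sqrt 2)^d = ((1+Real.sqrt 2)^d)^2 := by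
      rw [show (3:ℝ)+2*Real.sqrt 2 = (1+Real.sqrt 2)^2 by linear_combination -hs2,
        ← pow_mul, ← pow_mul, mul_comm]
    have hdd := dle d hd
    rw [hu2] at hWsum
    obtain ⟨u, hu⟩ : ∃ u:ℝ, u = (1+Real.sqrt 2)^d := ⟨_, rfl⟩
    rw [← hu] at hWsum hud hdd
    have hu5 : 5.8284 ≤ u := by linarith
    have hT0 : 0 ≤ ∑ k ∈ range d, |b (k+1)| * (((1+Real.sqrt 2)^(k+1) + (Real.sqrt 2-1)^(k+1))/2) :=
      Finset.sum_nonneg fun k _ => mul_nonneg (abs_nonneg _)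
        (by have h1 := pow_nonneg (by linarith : (0:ℝ) ≤ Real.sqrt 2 - 1) (k+1)
            have h2 := pow_nonneg (by linarith : (0:ℝ) ≤ 1 + Real.sqrt 2) (k+1)
            linarith)
    have hB : (((Real.sqrt 2+1)/2*u^2 + 2*(d:ℝ) + (Real.sqrt 2-1)/2)/4)*2
        ≤ (u - 1)^2 := numeric_final u d (Real.sqrt 2) hs2 hlb hub hu5 hdd
    have hTsq : (∑ k ∈ range d, |b (k+1)| * (((1+Real.sqrt 2)^(k+1) + (Real.sqrt 2-1)^(k+1))/2))^2
        ≤ (u - 1)^2 := by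
      calc _ ≤ 2 * ∑ k ∈ range d, (((1+Real.sqrt 2)^(k+1) + (Real.sqrt 2-1)^(k+1))/2)^2 := hCS
        _ ≤ (((Real.sqrt 2+1)/2*u^2 + 2*(d:ℝ) + (Real.sqrt 2-1)/2)/4)*2 := by linarith
        _ ≤ (u - 1)^2 := hB
    have hT_le : ∑ k ∈ range d, |b (k+1)| * (((1+Real.sqrt 2)^(k+1) + (Real.sqrt 2-1)^(k+1))/2)
        ≤ u - 1 := le_of_sq_le' _ u hT0 hTsq hu5
    have hfinal : |p.coeff j| ≤ u := by
      rw [hsplit]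
      calc |(∑ k ∈ range d, b (k+1) * (chT (k+1)).coeff j) + b 0 * (chT 0).coeff j|
          ≤ |∑ k ∈ range d, b (k+1) * (chT (k+1)).coeff j| + |b 0 * (chT 0).coeff j| :=
            abs_add_le _ _
        _ ≤ (u - 1) + 1 := add_le_add (le_trans hT hT_le) habs0
        _ = u := by ring
    rw [show Real.sqrt 2 + 1 = 1 + Real.sqrt 2 by ring, ← hu]
    exact hfinal
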